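/- arXiv:1902.09638 — 3 statements merged into one kernel-verified Lean document; each statement's English description precedes it below -/
import Mathlib

section
/- Let d ≥ 2 and δ > 0, and let V ⊆ S^{d−1} be a finite set with at least two elements that is a δ-covering of S^{d−1}. Then for every point x of the closed unit ball of ℝ^d there exist distinct points y₁, y₂ ∈ V such that dist(x, segment[y₁, y₂]) ≤ δ; that is, the complete geometric graph G(V) is a δ-covering of the closed unit ball. -/
/-!
Write `x = ‖x‖ • u` with `‖u‖ = 1`; then `x` lies on the diameter `[u, -u]`. Take `y₁ ∈ V` within
`δ` of `u` and `y₂ ∈ V` within `δ` of `-u`. The distance is jointly convex, so the point of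
`[y₁, y₂]` with the same barycentric coordinates as `x` is within `δ` of `x`. If `y₁ = y₂`, any
edge at `y₁` does as well.
-/

open Metric

section Normed

variable {E : Type*} [NormedAddCommGroup E] [NormedSpace ℝ E]

theorem infDist_segment_le_of_mem_segment {x y x' y' z : E} {δ : ℝ}
    (hz : z ∈ segment ℝ x y) (hx : dist x x' ≤ δ) (hy : dist y y' ≤ δ) :
    infDist z (segment ℝ x' y') ≤ δ := by
  obtain ⟨a, b, ha, hb, hab, rfl⟩ := hz
  calc infDist (a • x + b • y) (segment ℝ x' y')
      ≤ dist (a • x + b • y) (a • x' + b • y') :=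
        infDist_le_dist_of_mem ⟨a, b, ha, hb, hab, rfl⟩
    _ ≤ dist (a • x) (a • x') + dist (b • y) (b • y') := dist_add_add_le _ _ _ _
    _ = a * dist x x' + b * dist y y' := by
        rw [dist_smul₀, dist_smul₀, Real.norm_of_nonneg ha, Real.norm_of_nonneg hb]
    _ ≤ a * δ + b * δ := by gcongr
    _ = δ := by rw [← add_mul, hab, one_mul]

theorem exists_mem_sphere_norm_smul_eq [Nontrivial E] (x : E) :
    ∃ u ∈ sphere (0 : E) 1, ‖x‖ • u = x := by
  rcases eq_or_ne x 0 with rfl | hx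
  · obtain ⟨u, hu⟩ := (NormedSpace.sphere_nonempty (x := (0 : E))).2 zero_le_one
    exact ⟨u, hu, by simp⟩
  · have hx' : ‖x‖ ≠ 0 := norm_ne_zero_iff.2 hx
    refine ⟨‖x‖⁻¹ • x, ?_, ?_⟩
    · rw [mem_sphere_zero_iff_norm, norm_smul, norm_inv, norm_norm, inv_mul_cancel₀ hx']
    · rw [smul_smul, mul_inv_cancel₀ hx', one_smul]

theorem exists_mem_sphere_mem_segment_neg [Nontrivial E] {x : E} (hx : ‖x‖ ≤ 1) :
    ∃ u ∈ sphere (0 : E) 1, x ∈ segment ℝ u (-u) := by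
  obtain ⟨u, hu, hxu⟩ := exists_mem_sphere_norm_smul_eq x
  refine ⟨u, hu, (1 + ‖x‖) / 2, (1 - ‖x‖) / 2, by positivity, by linarith, by ring, ?_⟩
  conv_rhs => rw [← hxu]
  module

theorem Finset.exists_ne_infDist_segment_le {V : Finset E} (hV : 2 ≤ V.card)
    {x y₁ y₂ : E} {δ : ℝ} (hy₁ : y₁ ∈ V) (hy₂ : y₂ ∈ V)
    (h : infDist x (segment ℝ y₁ y₂) ≤ δ) :
    ∃ z₁ ∈ V, ∃ z₂ ∈ V, z₁ ≠ z₂ ∧ infDist x (segment ℝ z₁ z₂) ≤ δ := by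
  rcases ne_or_eq y₁ y₂ with hne | rfl
  · exact ⟨y₁, hy₁, y₂, hy₂, hne, h⟩
  obtain ⟨z, hz, hzy⟩ := V.exists_mem_ne hV y₁
  refine ⟨y₁, hy₁, z, hz, hzy.symm, le_trans ?_ h⟩
  rw [segment_same]
  exact infDist_le_infDist_of_subset (by simp [left_mem_segment]) (Set.singleton_nonempty y₁)

end Normed

theorem graph_covers_ball_general (d : ℕ) (δ : ℝ)
    (V : Finset (EuclideanSpace ℝ (Fin d)))
    (hVcard : 2 ≤ V.card)
    (hVcov : ∀ x ∈ Metric.sphere (0 : EuclideanSpace ℝ (Fin d)) 1, ∃ y ∈ V, dist x y ≤ δ) :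
    ∀ x ∈ Metric.closedBall (0 : EuclideanSpace ℝ (Fin d)) 1,
      ∃ y₁ ∈ V, ∃ y₂ ∈ V, y₁ ≠ y₂ ∧ Metric.infDist x (segment ℝ y₁ y₂) ≤ δ := by
  intro x hx
  have : Nontrivial (EuclideanSpace ℝ (Fin d)) := by
    obtain ⟨a, -, b, -, hab⟩ := Finset.one_lt_card.1 hVcard
    exact nontrivial_of_ne a b hab
  obtain ⟨u, hu, hxu⟩ := exists_mem_sphere_mem_segment_neg (mem_closedBall_zero_iff.1 hx)
  obtain ⟨y₁, hy₁, hd₁⟩ := hVcov u hu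
  obtain ⟨y₂, hy₂, hd₂⟩ := hVcov (-u) (by simpa using hu)
  exact V.exists_ne_infDist_segment_le hVcard hy₁ hy₂
    (infDist_segment_le_of_mem_segment hxu hd₁ hd₂)

/-- If `V ⊆ S^{d-1}` is a finite `δ`-covering of the unit sphere with at least two elements,
then the complete geometric graph on `V` is a `δ`-covering of the closed unit ball. -/
theorem graph_covers_ball (d : ℕ) (hd : 2 ≤ d) (δ : ℝ) (hδ : 0 < δ)
    (V : Finset (EuclideanSpace ℝ (Fin d)))
    (hVsphere : ↑V ⊆ Metric.sphere (0 : EuclideanSpace ℝ (Fin d)) 1)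
    (hVcard : 2 ≤ V.card)
    (hVcov : ∀ x ∈ Metric.sphere (0 : EuclideanSpace ℝ (Fin d)) 1, ∃ y ∈ V, dist x y ≤ δ) :
    ∀ x ∈ Metric.closedBall (0 : EuclideanSpace ℝ (Fin d)) 1,
      ∃ y₁ ∈ V, ∃ y₂ ∈ V, y₁ ≠ y₂ ∧ Metric.infDist x (segment ℝ y₁ y₂) ≤ δ :=
  graph_covers_ball_general d δ V hVcard hVcov
end

section
/- Let d ≥ 2, r ∈ (0,1), and h > 0. There exists a constant C_d > 0, depending only on d, such that for every x ∈ ℝ^d with ‖x‖ ≤ 1 − r and every y ∈ S^{d−1}, the surface measure of the set of directions {v ∈ S^{d−1} : there exists t > 0 with ‖x + t·v‖ = 1 and ‖x + t·v − y‖ ≤ h} is at most C_d·(h/r)^{d−1}. (That is, for a point at distance at least r from the boundary of the unit ball, the solid angle of directions whose exit point on the unit sphere lies in the spherical cap of radius h around y is of order (h/r)^{d−1}.) -/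
/-!
Every point of the unit sphere lies at distance at least `r` from `x`, so the radial projection
`z ↦ (z - x) / ‖z - x‖` is `2 / r`-Lipschitz on the sphere; it maps the cap
`S^{d-1} ∩ B̄(y, h)` onto a superset of the set of exit directions. This costs a factor
`(2 / r)^(d-1)` in `(d-1)`-dimensional Hausdorff measure, and it remains to bound the cap by
`O(h^(d-1))`. For `h ≤ 1` the cap is the image of a ball of radius `2 h` in the tangent hyperplane
at `y` under the gnomonic projection, which is 2-Lipschitz because that hyperplane avoids the
open unit ball. For `h > 1` the cap is bounded by the whole sphere, whose measure is finite since
the sphere is compact and covered by such small caps.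
-/

open MeasureTheory Metric
open scoped RealInnerProductSpace

section Normalize

variable {V : Type*} [NormedAddCommGroup V] [NormedSpace ℝ V]

theorem lipschitzOnWith_normalize {r : ℝ} (hr : 0 < r) :
    LipschitzOnWith (2 / r).toNNReal (NormedSpace.normalize : V → V) {a | r ≤ ‖a‖} := by
  refine LipschitzOnWith.of_dist_le_mul fun a (ha : r ≤ ‖a‖) b (hb : r ≤ ‖b‖) => ?_
  have ha0 : 0 < ‖a‖ := hr.trans_le ha
  have hb0 : 0 < ‖b‖ := hr.trans_le hb
  rw [dist_eq_norm, dist_eq_norm, Real.coe_toNNReal _ (by positivity)]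
  have hlength : ‖(‖a‖⁻¹ - ‖b‖⁻¹) • b‖ ≤ ‖a‖⁻¹ * ‖a - b‖ := by
    rw [norm_smul, Real.norm_eq_abs, inv_sub_inv ha0.ne' hb0.ne', abs_div,
      abs_of_pos (mul_pos ha0 hb0), div_mul_eq_mul_div, div_le_iff₀ (mul_pos ha0 hb0),
      show ‖a‖⁻¹ * ‖a - b‖ * (‖a‖ * ‖b‖) = ‖a - b‖ * ‖b‖ by field_simp]
    exact mul_le_mul_of_nonneg_right ((abs_norm_sub_norm_le b a).trans_eq (norm_sub_rev b a)) hb0.le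
  calc ‖NormedSpace.normalize a - NormedSpace.normalize b‖
      = ‖‖a‖⁻¹ • (a - b) + (‖a‖⁻¹ - ‖b‖⁻¹) • b‖ := by
        rw [NormedSpace.normalize, NormedSpace.normalize]; congr 1; module
    _ ≤ ‖a‖⁻¹ * ‖a - b‖ + ‖a‖⁻¹ * ‖a - b‖ := by
        refine (norm_add_le _ _).trans (add_le_add (le_of_eq ?_) hlength)
        rw [norm_smul, Real.norm_of_nonneg (by positivity)]
    _ ≤ 2 / r * ‖a - b‖ := by
        have : ‖a‖⁻¹ ≤ r⁻¹ := inv_anti₀ hr ha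
        rw [div_eq_mul_inv]
        nlinarith [norm_nonneg (a - b)]

end Normalize

theorem hausdorffMeasure_image_le_of_lipschitzOnWith {X Y : Type*} [EMetricSpace X]
    [EMetricSpace Y] [MeasurableSpace X] [BorelSpace X] [MeasurableSpace Y] [BorelSpace Y]
    {K : ℝ} (hK : 0 ≤ K) {f : X → Y} {s : Set X} (hf : LipschitzOnWith K.toNNReal f s) (n : ℕ) :
    μH[n] (f '' s) ≤ ENNReal.ofReal (K ^ n) * μH[n] s := by
  rw [ENNReal.ofReal_pow hK, ← ENNReal.rpow_natCast]
  exact hf.hausdorffMeasure_image_le (Nat.cast_nonneg n)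

section RadialProjection

variable {V : Type*} [NormedAddCommGroup V] [NormedSpace ℝ V]

theorem exit_directions_subset_image_normalize_sub (x y : V) (h : ℝ) :
    {v : V | ‖v‖ = 1 ∧ ∃ t : ℝ, 0 < t ∧ ‖x + t • v‖ = 1 ∧ ‖x + t • v - y‖ ≤ h} ⊆
      (fun z => NormedSpace.normalize (z - x)) '' (sphere 0 1 ∩ closedBall y h) := by
  rintro v ⟨hv, t, ht, hexit, hcap⟩
  refine ⟨x + t • v, ⟨mem_sphere_zero_iff_norm.2 hexit, mem_closedBall_iff_norm.2 hcap⟩, ?_⟩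
  simp only [add_sub_cancel_left, NormedSpace.normalize_smul_of_pos ht,
    NormedSpace.normalize_eq_self_of_norm_eq_one hv]

theorem lipschitzOnWith_normalize_sub_sphere {x : V} {r : ℝ} (hr : 0 < r) (hx : ‖x‖ ≤ 1 - r) :
    LipschitzOnWith (2 / r).toNNReal (fun z => NormedSpace.normalize (z - x)) (sphere 0 1) := by
  have hmaps : Set.MapsTo (· - x) (sphere (0 : V) 1) {a | r ≤ ‖a‖} := fun z hz => by
    have := norm_sub_norm_le z x
    rw [mem_sphere_zero_iff_norm.1 hz] at this
    exact show r ≤ ‖z - x‖ by linarith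
  have hsub : LipschitzWith 1 (· - x : V → V) := LipschitzWith.of_dist_le_mul fun z w => by simp
  simpa only [mul_one, Function.comp_def] using
    (lipschitzOnWith_normalize hr).comp hsub.lipschitzOnWith hmaps

end RadialProjection

section GnomonicChart

variable {E : Type*} [NormedAddCommGroup E] [InnerProductSpace ℝ E]

theorem one_le_norm_add_of_mem_orthogonal {e u : E} (he : ‖e‖ = 1) (hu : u ∈ (ℝ ∙ e)ᗮ) :
    1 ≤ ‖e + u‖ := by
  have hpyth := norm_add_sq_eq_norm_sq_add_norm_sq_real
    (Submodule.mem_orthogonal_singleton_iff_inner_right.1 hu)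
  rw [he] at hpyth
  nlinarith [norm_nonneg (e + u), mul_self_nonneg ‖u‖]

theorem lipschitzWith_normalize_add_orthogonal {F : Type*} [NormedAddCommGroup F]
    [NormedSpace ℝ F] {e : E} (he : ‖e‖ = 1) (φ : F ≃ₗᵢ[ℝ] (ℝ ∙ e)ᗮ) :
    LipschitzWith (2 : ℝ).toNNReal (fun u => NormedSpace.normalize (e + φ u)) := by
  have hmaps : Set.MapsTo (fun u => e + (φ u : E)) Set.univ {a | (1 : ℝ) ≤ ‖a‖} :=
    fun u _ => one_le_norm_add_of_mem_orthogonal he (φ u).2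
  have hshift : LipschitzWith 1 (fun u => e + (φ u : E)) :=
    LipschitzWith.of_dist_le_mul fun u w => by
      rw [dist_add_left, NNReal.coe_one, one_mul, ← Subtype.dist_eq, φ.dist_map]
  simpa only [div_one, mul_one, Function.comp_def, lipschitzOnWith_univ] using
    (lipschitzOnWith_normalize one_pos).comp hshift.lipschitzOnWith hmaps

/-- Gnomonic projection: `v` is the central projection of the point
`e + ⟪e, v⟫⁻¹ • (v - ⟪e, v⟫ • e)` of the tangent hyperplane at `e`. -/
theorem sphere_inter_closedBall_subset_image_normalize_add {F : Type*} [NormedAddCommGroup F]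
    [NormedSpace ℝ F] {e : E} (he : ‖e‖ = 1) (φ : F ≃ₗᵢ[ℝ] (ℝ ∙ e)ᗮ) {h : ℝ} (hh : h ≤ 1) :
    sphere 0 1 ∩ closedBall e h ⊆
      (fun u => NormedSpace.normalize (e + φ u)) '' closedBall 0 (2 * h) := by
  rintro v ⟨hv, hve⟩
  rw [mem_sphere_zero_iff_norm] at hv
  rw [mem_closedBall_iff_norm] at hve
  set s := ⟪e, v⟫
  have hdist : ‖v - e‖ ^ 2 = 2 - 2 * s := by
    rw [norm_sub_sq_real, hv, he, real_inner_comm]; ring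
  have hs : 1 / 2 ≤ s := by nlinarith [norm_nonneg (v - e)]
  have hw : ⟪e, v - s • e⟫ = 0 := by
    rw [inner_sub_right, real_inner_smul_right, real_inner_self_eq_norm_sq, he]; ring
  have hwe : ‖v - s • e‖ ≤ h := by
    have hpyth := norm_add_sq_eq_norm_sq_add_norm_sq_real
      (x := v - s • e) (y := (s - 1) • e) (by rw [real_inner_comm, real_inner_smul_left, hw, mul_zero])
    rw [show v - s • e + (s - 1) • e = v - e by module, norm_smul, he] at hpyth
    nlinarith [norm_nonneg (v - s • e), norm_nonneg (v - e), mul_self_nonneg (s - 1)]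
  refine ⟨φ.symm ⟨s⁻¹ • (v - s • e),
    Submodule.smul_mem _ _ (Submodule.mem_orthogonal_singleton_iff_inner_right.2 hw)⟩, ?_, ?_⟩
  · rw [mem_closedBall_zero_iff, LinearIsometryEquiv.norm_map, Submodule.coe_norm,
      Submodule.coe_mk, norm_smul, Real.norm_of_nonneg (by positivity), inv_mul_le_iff₀ (by linarith)]
    nlinarith [mul_nonneg ((norm_nonneg _).trans hwe) (by linarith : (0 : ℝ) ≤ 2 * s - 1)]
  · have hsv : e + s⁻¹ • (v - s • e) = s⁻¹ • v := by
      rw [smul_sub, smul_smul, inv_mul_cancel₀ (by linarith), one_smul]; abel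
    simp only [LinearIsometryEquiv.apply_symm_apply, hsv,
      NormedSpace.normalize_smul_of_pos (inv_pos.2 (by linarith : (0 : ℝ) < s)),
      NormedSpace.normalize_eq_self_of_norm_eq_one hv]

end GnomonicChart

section SphereCaps

variable {E : Type*} [NormedAddCommGroup E] [InnerProductSpace ℝ E] [FiniteDimensional ℝ E]
  [MeasurableSpace E] [BorelSpace E] {n : ℕ}

theorem hausdorffMeasure_sphere_inter_closedBall_le (hE : Module.finrank ℝ E = n + 1) {e : E}
    (he : ‖e‖ = 1) {h : ℝ} (h0 : 0 ≤ h) (hh : h ≤ 1) :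
    μH[n] (sphere (0 : E) 1 ∩ closedBall e h) ≤
      ENNReal.ofReal ((4 * h) ^ n) * μH[n] (ball (0 : EuclideanSpace ℝ (Fin n)) 1) := by
  have : Fact (Module.finrank ℝ E = n + 1) := ⟨hE⟩
  have hH : Module.finrank ℝ (ℝ ∙ e)ᗮ = n :=
    Submodule.finrank_orthogonal_span_singleton (norm_ne_zero_iff.1 (he ▸ one_ne_zero))
  set φ := ((stdOrthonormalBasis ℝ (ℝ ∙ e)ᗮ).reindex (finCongr hH)).repr.symm
  calc μH[n] (sphere (0 : E) 1 ∩ closedBall e h)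
      ≤ μH[n] ((fun u => NormedSpace.normalize (e + φ u)) '' closedBall 0 (2 * h)) :=
        measure_mono (sphere_inter_closedBall_subset_image_normalize_add he φ hh)
    _ ≤ ENNReal.ofReal (2 ^ n) * μH[n] (closedBall (0 : EuclideanSpace ℝ (Fin n)) (2 * h)) :=
        hausdorffMeasure_image_le_of_lipschitzOnWith zero_le_two
          (lipschitzWith_normalize_add_orthogonal he φ).lipschitzOnWith n
    _ = ENNReal.ofReal ((4 * h) ^ n) * μH[n] (ball (0 : EuclideanSpace ℝ (Fin n)) 1) := by
        rw [Measure.addHaar_closedBall _ _ (by positivity), finrank_euclideanSpace_fin, ← mul_assoc,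
          ← ENNReal.ofReal_mul (by positivity), ← mul_pow, ← mul_assoc]
        norm_num

theorem hausdorffMeasure_sphere_lt_top (hE : Module.finrank ℝ E = n + 1) :
    μH[n] (sphere (0 : E) 1) < ⊤ :=
  (isCompact_sphere 0 1).measure_lt_top_of_nhdsWithin fun e he =>
    ⟨_, inter_mem_nhdsWithin _ (closedBall_mem_nhds e one_pos),
      (hausdorffMeasure_sphere_inter_closedBall_le hE (mem_sphere_zero_iff_norm.1 he) zero_le_one
        le_rfl).trans_lt (ENNReal.mul_lt_top ENNReal.ofReal_lt_top measure_ball_lt_top)⟩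

theorem exists_hausdorffMeasure_sphere_inter_closedBall_le (hE : Module.finrank ℝ E = n + 1) :
    ∃ A : ℝ, 0 < A ∧ ∀ e : E, ‖e‖ = 1 → ∀ h : ℝ, 0 ≤ h →
      μH[n] (sphere (0 : E) 1 ∩ closedBall e h) ≤ ENNReal.ofReal (A * h ^ n) := by
  set κ := μH[n] (ball (0 : EuclideanSpace ℝ (Fin n)) 1)
  set σ := μH[n] (sphere (0 : E) 1)
  have hκ : κ ≠ ⊤ := measure_ball_lt_top.ne
  have hσ : σ ≠ ⊤ := (hausdorffMeasure_sphere_lt_top hE).ne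
  refine ⟨4 ^ n * κ.toReal + σ.toReal + 1, by positivity, fun e he h h0 => ?_⟩
  rcases le_or_gt h 1 with hh | hh
  · calc μH[n] (sphere (0 : E) 1 ∩ closedBall e h) ≤ ENNReal.ofReal ((4 * h) ^ n) * κ :=
          hausdorffMeasure_sphere_inter_closedBall_le hE he h0 hh
      _ = ENNReal.ofReal (4 ^ n * κ.toReal * h ^ n) := by
          rw [← ENNReal.ofReal_toReal hκ, ← ENNReal.ofReal_mul (by positivity),
            ENNReal.toReal_ofReal ENNReal.toReal_nonneg, mul_pow]
          ring_nf
      _ ≤ ENNReal.ofReal ((4 ^ n * κ.toReal + σ.toReal + 1) * h ^ n) := by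
          gcongr; linarith [ENNReal.toReal_nonneg (a := σ)]
  · have hpow : 1 ≤ h ^ n := one_le_pow₀ hh.le
    calc μH[n] (sphere (0 : E) 1 ∩ closedBall e h) ≤ σ := measure_mono Set.inter_subset_left
      _ = ENNReal.ofReal σ.toReal := (ENNReal.ofReal_toReal hσ).symm
      _ ≤ ENNReal.ofReal ((4 ^ n * κ.toReal + σ.toReal + 1) * h ^ n) := by
          gcongr
          calc σ.toReal ≤ σ.toReal * h ^ n := le_mul_of_one_le_right ENNReal.toReal_nonneg hpow
            _ ≤ (4 ^ n * κ.toReal + σ.toReal + 1) * h ^ n := by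
                gcongr
                linarith [show 0 ≤ 4 ^ n * κ.toReal by positivity]

end SphereCaps

/-- For a point `x` at distance at least `r` from the unit sphere, the solid angle of
directions whose exit point on the unit sphere lies in the spherical cap of radius `h`
around a boundary point `y` is at most `C_d (h/r)^{d-1}`, the constant depending only
on the dimension.  The solid angle is measured by the `(d-1)`-dimensional Hausdorff
measure on the unit sphere of directions. -/
theorem exit_cap_solid_angle (d : ℕ) (hd : 2 ≤ d) :
    ∃ C : ℝ, 0 < C ∧ ∀ r : ℝ, r ∈ Set.Ioo (0 : ℝ) 1 → ∀ h : ℝ, 0 < h →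
      ∀ x : EuclideanSpace ℝ (Fin d), ‖x‖ ≤ 1 - r →
      ∀ y ∈ Metric.sphere (0 : EuclideanSpace ℝ (Fin d)) 1,
        μH[(d : ℝ) - 1] {v : EuclideanSpace ℝ (Fin d) | ‖v‖ = 1 ∧
            ∃ t : ℝ, 0 < t ∧ ‖x + t • v‖ = 1 ∧ ‖x + t • v - y‖ ≤ h}
          ≤ ENNReal.ofReal (C * (h / r) ^ (d - 1)) := by
  obtain ⟨n, rfl⟩ : ∃ n, d = n + 1 := ⟨d - 1, by omega⟩
  obtain ⟨A, hA, hcap⟩ := exists_hausdorffMeasure_sphere_inter_closedBall_le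
    (E := EuclideanSpace ℝ (Fin (n + 1))) finrank_euclideanSpace_fin
  refine ⟨2 ^ n * A, by positivity, fun r ⟨hr, _⟩ h hh x hx y hy => ?_⟩
  rw [Nat.cast_add_one, add_sub_cancel_right, Nat.add_sub_cancel]
  calc _ ≤ μH[n] ((fun z => NormedSpace.normalize (z - x)) '' (sphere 0 1 ∩ closedBall y h)) :=
        measure_mono (exit_directions_subset_image_normalize_sub x y h)
    _ ≤ ENNReal.ofReal ((2 / r) ^ n) * μH[n] (sphere 0 1 ∩ closedBall y h) :=
        hausdorffMeasure_image_le_of_lipschitzOnWith (by positivity)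
          ((lipschitzOnWith_normalize_sub_sphere hr hx).mono Set.inter_subset_left) n
    _ ≤ ENNReal.ofReal ((2 / r) ^ n) * ENNReal.ofReal (A * h ^ n) :=
        mul_le_mul_right (hcap y (mem_sphere_zero_iff_norm.1 hy) h hh.le) _
    _ = ENNReal.ofReal (2 ^ n * A * (h / r) ^ n) := by
        rw [← ENNReal.ofReal_mul (by positivity), div_pow, div_pow]
        ring_nf
end

section
/- Let Ω ⊆ ℝ^d (d ≥ 2) be open, let σ_tf, σ_s, δσ : Ω → ℝ, let p : ℝ → ℝ be a bounded measurable scattering phase function with associated scattering operator K, and let u, w : Ω × S^{d−1} → ℝ be such that for each fixed v the maps x ↦ u(x,v), x ↦ w(x,v) are differentiable on Ω and for each fixed x the maps v ↦ u(x,v), v ↦ w(x,v) are integrable on S^{d−1}. Suppose ψ(x) := ∫_{S^{d−1}} u(x,v)·u(x,−v) dv > 0 on Ω, that w satisfies v·∇w + σ_tf·w = σ_s·Kw − δσ·u on Ω × S^{d−1}, and that the internal-data identity −δσ(x)·ψ(x) − 2·σ_tf(x)·∫_{S^{d−1}} w(x,v)·u(x,−v) dv + 2·σ_s(x)·∫_{S^{d−1}}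 Kw(x,v)·u(x,−v) dv = 0 holds for all x ∈ Ω. Then w satisfies the equation v·∇w(x,v) + σ_tf(x)·w(x,v) = σ_s(x)·Kw(x,v) + 2·σ_tf(x)·K₁w(x,v) − 2·σ_s(x)·K₁(Kw)(x,v) on Ω × S^{d−1}, where K₁f(x,v) = (1/ψ(x))·u(x,v)·∫_{S^{d−1}} u(x,−v′)·f(x,v′) dv′. -/
open MeasureTheory
open scoped RealInnerProductSpace

/-- The surface measure on the unit sphere of directions in `ℝ^d`, realized as the
`(d-1)`-dimensional Hausdorff measure restricted to the unit sphere. -/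
noncomputable def sphereMeasure (d : ℕ) : Measure (EuclideanSpace ℝ (Fin d)) :=
  (μH[(d : ℝ) - 1]).restrict (Metric.sphere (0 : EuclideanSpace ℝ (Fin d)) 1)

theorem eq_inv_mul_of_internal_data_eq_zero {𝕜 : Type*} [Field 𝕜] {δ ψ σtf σs a b : 𝕜}
    (hψ : ψ ≠ 0) (h : -δ * ψ - 2 * σtf * a + 2 * σs * b = 0) :
    δ = ψ⁻¹ * (2 * σs * b - 2 * σtf * a) := by
  rw [eq_inv_mul_iff_mul_eq₀ hψ]
  linear_combination -h

theorem vanishing_internal_data_rte_general (d : ℕ)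
    (Ω : Set (EuclideanSpace ℝ (Fin d)))
    (σtf σs δσ : EuclideanSpace ℝ (Fin d) → ℝ)
    (p : ℝ → ℝ)
    (u w : EuclideanSpace ℝ (Fin d) → EuclideanSpace ℝ (Fin d) → ℝ)
    (ψ : EuclideanSpace ℝ (Fin d) → ℝ)
    (hψ_pos : ∀ x ∈ Ω, 0 < ψ x)
    (hw_eq : ∀ x ∈ Ω, ∀ v ∈ Metric.sphere (0 : EuclideanSpace ℝ (Fin d)) 1,
      fderiv ℝ (fun y => w y v) x v + σtf x * w x v
        = σs x * (∫ v', p ⟪v, v'⟫ * w x v' ∂(sphereMeasure d)) - δσ x * u x v)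
    (hdata : ∀ x ∈ Ω,
      -δσ x * ψ x
          - 2 * σtf x * (∫ v, w x v * u x (-v) ∂(sphereMeasure d))
          + 2 * σs x * (∫ v, (∫ v', p ⟪v, v'⟫ * w x v' ∂(sphereMeasure d)) * u x (-v)
              ∂(sphereMeasure d)) = 0) :
    ∀ x ∈ Ω, ∀ v ∈ Metric.sphere (0 : EuclideanSpace ℝ (Fin d)) 1,
      fderiv ℝ (fun y => w y v) x v + σtf x * w x v
        = σs x * (∫ v', p ⟪v, v'⟫ * w x v' ∂(sphereMeasure d))
          + 2 * σtf x * ((ψ x)⁻¹ * u x v *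
              ∫ v', u x (-v') * w x v' ∂(sphereMeasure d))
          - 2 * σs x * ((ψ x)⁻¹ * u x v *
              ∫ v', u x (-v') * (∫ v'', p ⟪v', v''⟫ * w x v'' ∂(sphereMeasure d))
                ∂(sphereMeasure d)) := by
  intro x hx v hv
  rw [hw_eq x hx v hv, eq_inv_mul_of_internal_data_eq_zero (hψ_pos x hx).ne' (hdata x hx)]
  simp_rw [mul_comm (u x (-_))]
  ring

/-- If `w` solves the linearized transport equation with source `-δσ·u` and the internal
data `-δσ ψ - 2 σ_tf ∫ w(x,v) u(x,-v) dv + 2 σ_s ∫ (Kw)(x,v) u(x,-v) dv` vanishes on `Ω`,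
where `ψ(x) = ∫ u(x,v) u(x,-v) dv > 0`, then `w` satisfies
`v·∇w + σ_tf w = σ_s Kw + 2 σ_tf K₁ w - 2 σ_s K₁(Kw)`, with
`K₁ f(x,v) = ψ(x)⁻¹ u(x,v) ∫ u(x,-v') f(x,v') dv'`. -/
theorem vanishing_internal_data_rte (d : ℕ) (hd : 2 ≤ d)
    (Ω : Set (EuclideanSpace ℝ (Fin d))) (hΩ : IsOpen Ω)
    (σtf σs δσ : EuclideanSpace ℝ (Fin d) → ℝ)
    (p : ℝ → ℝ) (hpm : Measurable p) (hpb : ∃ Mp : ℝ, ∀ t : ℝ, |p t| ≤ Mp)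
    (u w : EuclideanSpace ℝ (Fin d) → EuclideanSpace ℝ (Fin d) → ℝ)
    (hu_diff : ∀ v ∈ Metric.sphere (0 : EuclideanSpace ℝ (Fin d)) 1, ∀ x ∈ Ω,
      DifferentiableAt ℝ (fun y => u y v) x)
    (hw_diff : ∀ v ∈ Metric.sphere (0 : EuclideanSpace ℝ (Fin d)) 1, ∀ x ∈ Ω,
      DifferentiableAt ℝ (fun y => w y v) x)
    (hu_int : ∀ x ∈ Ω, Integrable (fun v => u x v) (sphereMeasure d))
    (hw_int : ∀ x ∈ Ω, Integrable (fun v => w x v) (sphereMeasure d))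
    (ψ : EuclideanSpace ℝ (Fin d) → ℝ)
    (hψ_def : ∀ x, ψ x = ∫ v, u x v * u x (-v) ∂(sphereMeasure d))
    (hψ_pos : ∀ x ∈ Ω, 0 < ψ x)
    (hw_eq : ∀ x ∈ Ω, ∀ v ∈ Metric.sphere (0 : EuclideanSpace ℝ (Fin d)) 1,
      fderiv ℝ (fun y => w y v) x v + σtf x * w x v
        = σs x * (∫ v', p ⟪v, v'⟫ * w x v' ∂(sphereMeasure d)) - δσ x * u x v)
    (hdata : ∀ x ∈ Ω,
      -δσ x * ψ x
          - 2 * σtf x * (∫ v, w x v * u x (-v) ∂(sphereMeasure d))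
          + 2 * σs x * (∫ v, (∫ v', p ⟪v, v'⟫ * w x v' ∂(sphereMeasure d)) * u x (-v)
              ∂(sphereMeasure d)) = 0) :
    ∀ x ∈ Ω, ∀ v ∈ Metric.sphere (0 : EuclideanSpace ℝ (Fin d)) 1,
      fderiv ℝ (fun y => w y v) x v + σtf x * w x v
        = σs x * (∫ v', p ⟪v, v'⟫ * w x v' ∂(sphereMeasure d))
          + 2 * σtf x * ((ψ x)⁻¹ * u x v *
              ∫ v', u x (-v') * w x v' ∂(sphereMeasure d))
          - 2 * σs x * ((ψ x)⁻¹ * u x v *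
              ∫ v', u x (-v') * (∫ v'', p ⟪v', v''⟫ * w x v'' ∂(sphereMeasure d))
                ∂(sphereMeasure d)) :=
  vanishing_internal_data_rte_general d Ω σtf σs δσ p u w ψ hψ_pos hw_eq hdata
end
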